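/- The function F(c) = (c+t−1/2)·ln(c+t−1/2) + (3−c−t)·ln(3−c−t) + t·ln(2t) + (1/2−t)·ln(1/2−t), with t = t(c) = (1/2)·(√((7/2)² + 3c + c²) − 5/2 − c), attains its minimum over 0 < c < 3 at c = 19/12; equivalently, B(c) = 5^{5/2}/(8·e^{F(c)}) attains its maximum 4√3 at c = 19/12. -/
import Mathlib


noncomputable def tFun (c : ℝ) : ℝ :=
  (1 / 2) * (Real.sqrt ((7 / 2) ^ 2 + 3 * c + c ^ 2) - 5 / 2 - c)

noncomputable def Ffun (c : ℝ) : ℝ :=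
  (c + tFun c - 1 / 2) * Real.log (c + tFun c - 1 / 2) +
    (3 - c - tFun c) * Real.log (3 - c - tFun c) +
    tFun c * Real.log (2 * tFun c) +
    (1 / 2 - tFun c) * Real.log (1 / 2 - tFun c)

noncomputable def Bfun (c : ℝ) : ℝ :=
  (5 : ℝ) ^ (5 / 2 : ℝ) / (8 * Real.exp (Ffun c))

lemma tFun_val : tFun (19 / 12) = 1 / 6 := by
  unfold tFun
  rw [show ((7 / 2 : ℝ) ^ 2 + 3 * (19 / 12) + (19 / 12) ^ 2) = (53 / 12) ^ 2 by norm_num,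
    Real.sqrt_sq (by norm_num)]
  norm_num

lemma Ffun_val :
    Ffun (19 / 12) = (5 / 2) * Real.log (5 / 4) + (1 / 2) * Real.log (1 / 3) := by
  unfold Ffun
  rw [tFun_val]
  norm_num
  ring

lemma tFun_bounds {c : ℝ} (h0 : 0 < c) (h3 : c < 3) :
    0 < tFun c ∧ tFun c < 1 / 2 ∧ 1 / 2 < c + tFun c ∧ c + tFun c < 3 := by
  have harg : (0 : ℝ) ≤ (7 / 2) ^ 2 + 3 * c + c ^ 2 := by nlinarith
  have hs2 : Real.sqrt ((7 / 2) ^ 2 + 3 * c + c ^ 2) ^ 2 = (7 / 2) ^ 2 + 3 * c + c ^ 2 :=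
    Real.sq_sqrt harg
  have hsnn : 0 ≤ Real.sqrt ((7 / 2) ^ 2 + 3 * c + c ^ 2) := Real.sqrt_nonneg _
  set s := Real.sqrt ((7 / 2) ^ 2 + 3 * c + c ^ 2) with hs
  have h1 : c + 5 / 2 < s := by nlinarith [sq_nonneg (s - (c + 5 / 2)), sq_nonneg (s + c + 5 / 2)]
  have h2 : s < c + 7 / 2 := by nlinarith [sq_nonneg (s - (c + 7 / 2))]
  have h3' : 7 / 2 - c < s := by nlinarith [sq_nonneg (s - (7 / 2 - c)), sq_nonneg (s + 7 / 2 - c)]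
  have h4 : s < 17 / 2 - c := by nlinarith [sq_nonneg (s - (17 / 2 - c))]
  unfold tFun
  rw [← hs]
  refine ⟨by linarith, by linarith, by linarith, by linarith⟩

lemma Ffun_lower {c : ℝ} (h0 : 0 < c) (h3 : c < 3) : Ffun (19 / 12) ≤ Ffun c := by
  obtain ⟨ht0, ht2, hct1, hct3⟩ := tFun_bounds h0 h3
  set t := tFun c with ht
  have ha : (0 : ℝ) ≤ c + t - 1 / 2 := by linarith
  have hb : (0 : ℝ) ≤ 3 - c - t := by linarith
  have hA : (5 / 4 : ℝ) * Real.log (5 / 4) ≤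
      (1 / 2) * ((c + t - 1 / 2) * Real.log (c + t - 1 / 2)) +
        (1 / 2) * ((3 - c - t) * Real.log (3 - c - t)) := by
    have h := Real.convexOn_mul_log.2 (Set.mem_Ici.mpr ha) (Set.mem_Ici.mpr hb)
      (by norm_num : (0:ℝ) ≤ 1/2) (by norm_num : (0:ℝ) ≤ 1/2) (by norm_num)
    rw [smul_eq_mul, smul_eq_mul, smul_eq_mul, smul_eq_mul,
      show (1/2 : ℝ) * (c + t - 1/2) + (1/2) * (3 - c - t) = 5/4 by ring] at h
    exact h
  have hB : (1 / 3 : ℝ) * Real.log (1 / 3) ≤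
      (1 / 3) * ((2 * t) * Real.log (2 * t)) +
        (2 / 3) * ((1 / 2 - t) * Real.log (1 / 2 - t)) := by
    have h := Real.convexOn_mul_log.2 (Set.mem_Ici.mpr (by linarith : (0:ℝ) ≤ 2 * t))
      (Set.mem_Ici.mpr (by linarith : (0:ℝ) ≤ 1/2 - t))
      (by norm_num : (0:ℝ) ≤ 1/3) (by norm_num : (0:ℝ) ≤ 2/3) (by norm_num)
    rw [smul_eq_mul, smul_eq_mul, smul_eq_mul, smul_eq_mul,
      show (1/3 : ℝ) * (2 * t) + (2/3) * (1/2 - t) = 1/3 by ring] at h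
    exact h
  rw [Ffun_val]
  show (5 / 2) * Real.log (5 / 4) + (1 / 2) * Real.log (1 / 3) ≤
    (c + t - 1 / 2) * Real.log (c + t - 1 / 2) +
      (3 - c - t) * Real.log (3 - c - t) +
      t * Real.log (2 * t) + (1 / 2 - t) * Real.log (1 / 2 - t)
  nlinarith [hA, hB]

/-- `F` attains its minimum over `(0,3)` at `c = 19/12`; equivalently `B`
attains its maximum `4√3` there. -/
theorem Ffun_min_at_19_12 :
    (∀ c ∈ Set.Ioo (0 : ℝ) 3, Ffun (19 / 12) ≤ Ffun c) ∧
      (∀ c ∈ Set.Ioo (0 : ℝ) 3, Bfun c ≤ Bfun (19 / 12)) ∧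
      Bfun (19 / 12) = 4 * Real.sqrt 3 := by
  refine ⟨fun c hc => Ffun_lower hc.1 hc.2, fun c hc => ?_, ?_⟩
  · unfold Bfun
    gcongr
    exact Ffun_lower hc.1 hc.2
  · unfold Bfun
    rw [Ffun_val]
    have h1 : Real.exp ((5 / 2) * Real.log (5 / 4) + (1 / 2) * Real.log (1 / 3)) =
        (5 / 4 : ℝ) ^ (5 / 2 : ℝ) * (1 / 3 : ℝ) ^ (1 / 2 : ℝ) := by
      rw [Real.exp_add, Real.rpow_def_of_pos (by norm_num), Real.rpow_def_of_pos (by norm_num),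
        mul_comm (Real.log (5/4)), mul_comm (Real.log (1/3))]
    rw [h1]
    have h54 : (5 / 4 : ℝ) ^ (5 / 2 : ℝ) = (5 : ℝ) ^ (5 / 2 : ℝ) / 32 := by
      rw [Real.div_rpow (by norm_num) (by norm_num)]
      congr 1
      rw [show (4 : ℝ) = 2 ^ (2 : ℕ) by norm_num, ← Real.rpow_natCast (2:ℝ) 2,
        ← Real.rpow_mul (by norm_num)]
      norm_num
    have h13 : (1 / 3 : ℝ) ^ (1 / 2 : ℝ) = 1 / Real.sqrt 3 := by
      rw [← Real.sqrt_eq_rpow, Real.sqrt_div' 1 (by norm_num)]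
      simp [Real.sqrt_one]
    rw [h54, h13]
    have h5 : (0 : ℝ) < (5 : ℝ) ^ (5 / 2 : ℝ) := Real.rpow_pos_of_pos (by norm_num) _
    have hs3 : (0 : ℝ) < Real.sqrt 3 := Real.sqrt_pos.mpr (by norm_num)
    have hsq : Real.sqrt 3 * Real.sqrt 3 = 3 := Real.mul_self_sqrt (by norm_num)
    field_simp
    nlinarith [hsq, h5, hs3]
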